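/- Let φ be a Schwartz function on ℝⁿ satisfying |φ(y)| ≤ C(1+|y|)^{-n-δ} for some δ > 0, let g ∈ BMO(ℝⁿ), and let Q be a cube. Then for all x ∈ Q and t > l(Q), |φ_t * (g − ⟨g⟩_Q)(x)| ≲ (1 + |log(t/l(Q))|) ‖g‖_{BMO}, with implicit constant depending on n, δ, C. -/

import Mathlib

open MeasureTheory

noncomputable section

/-- The closed axis-parallel cube in `ℝⁿ` with center `c` and side length `l`. -/
def cubeC {n : ℕ} (c : EuclideanSpace ℝ (Fin n)) (l : ℝ) : Set (EuclideanSpace ℝ (Fin n)) :=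
  {y | ∀ j, |y j - c j| ≤ l / 2}

/-- The average of `g` over the cube with center `c` and side length `l`. -/
def cAvg {n : ℕ} (g : EuclideanSpace ℝ (Fin n) → ℝ) (c : EuclideanSpace ℝ (Fin n)) (l : ℝ) : ℝ :=
  (volume (cubeC c l)).toReal⁻¹ * ∫ y in cubeC c l, g y

/-!
Fix `x ∈ Q` and work with the cubes `2ʲ · 2l(Q)` centred at `x`, the first of which contains `Q`.
Comparing means along this chain costs `2ⁿ ‖g‖_BMO` per doubling, so if `s ∈ [2t, 4t]` is one of
its side lengths, then on the cube of side `2ᵏ s` the mean of `|g - ⟨g⟩_Q|` is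
`O((k + log₂(t/l(Q))) ‖g‖_BMO)`. Off that cube `|φ_t(x - ·)| = O(t⁻ⁿ 2^{-k(n+δ)})`, while its
volume is `O(2^{kn} tⁿ)`; summing over the dyadic annuli gives
`Σₖ (k + log₂(t/l(Q))) 2^{-kδ} = O(1 + log(t/l(Q)))`.
-/

section Cube

variable {n : ℕ}

theorem cubeC_eq_preimage_pi (c : EuclideanSpace ℝ (Fin n)) (l : ℝ) :
    cubeC c l = (MeasurableEquiv.toLp 2 (Fin n → ℝ)).symm ⁻¹'
      Set.univ.pi fun j => Set.Icc (c j - l / 2) (c j + l / 2) := by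
  ext y
  simp only [cubeC, Set.mem_ofPred_eq, Set.mem_preimage, Set.mem_univ_pi, Set.mem_Icc, abs_le,
    MeasurableEquiv.coe_toLp_symm]
  exact forall_congr' fun j => by constructor <;> rintro ⟨h₁, h₂⟩ <;> constructor <;> linarith

theorem measurableSet_cubeC (c : EuclideanSpace ℝ (Fin n)) (l : ℝ) :
    MeasurableSet (cubeC c l) := by
  rw [cubeC_eq_preimage_pi]
  exact (MeasurableEquiv.toLp 2 (Fin n → ℝ)).symm.measurable
    (MeasurableSet.univ_pi fun _ => measurableSet_Icc)

theorem isCompact_cubeC (c : EuclideanSpace ℝ (Fin n)) (l : ℝ) : IsCompact (cubeC c l) := by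
  rw [cubeC_eq_preimage_pi]
  exact (PiLp.continuousLinearEquiv 2 ℝ (fun _ : Fin n => ℝ)).toHomeomorph.isCompact_preimage.2
    (isCompact_univ_pi fun _ => isCompact_Icc)

theorem integrableOn_const_cubeC (c : EuclideanSpace ℝ (Fin n)) (l A : ℝ) :
    IntegrableOn (fun _ => A) (cubeC c l) :=
  integrableOn_const (isCompact_cubeC c l).measure_lt_top.ne

theorem volume_cubeC_toReal (c : EuclideanSpace ℝ (Fin n)) {l : ℝ} (hl : 0 ≤ l) :
    (volume (cubeC c l)).toReal = l ^ n := by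
  rw [cubeC_eq_preimage_pi, (EuclideanSpace.volume_preserving_symm_measurableEquiv_toLp
    (Fin n)).measure_preimage (MeasurableSet.univ_pi fun _ => measurableSet_Icc).nullMeasurableSet,
    volume_pi_pi]
  simp [Real.volume_Icc, hl]

theorem cubeC_mono (c : EuclideanSpace ℝ (Fin n)) {l l' : ℝ} (h : l ≤ l') :
    cubeC c l ⊆ cubeC c l' :=
  fun _ hy j => (hy j).trans (by linarith)

theorem cubeC_subset_cubeC_two_mul {c x : EuclideanSpace ℝ (Fin n)} {l : ℝ}
    (hx : x ∈ cubeC c l) : cubeC c l ⊆ cubeC x (2 * l) := by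
  intro y hy j
  calc |y j - x j| ≤ |y j - c j| + |c j - x j| := abs_sub_le _ _ _
    _ ≤ 2 * l / 2 := by linarith [hy j, hx j, abs_sub_comm (c j) (x j)]

theorem half_lt_norm_sub_of_notMem_cubeC {x y : EuclideanSpace ℝ (Fin n)} {s : ℝ}
    (hy : y ∉ cubeC x s) : s / 2 < ‖x - y‖ := by
  obtain ⟨j, hj⟩ : ∃ j, s / 2 < |y j - x j| := by simpa [cubeC] using hy
  calc s / 2 < ‖(y - x) j‖ := hj
    _ ≤ ‖x - y‖ := norm_sub_rev x y ▸ PiLp.norm_apply_le (y - x) j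

theorem monotone_cubeC_two_pow_mul (x : EuclideanSpace ℝ (Fin n)) {s : ℝ} (hs : 0 ≤ s) :
    Monotone fun k : ℕ => cubeC x (2 ^ k * s) :=
  fun _ _ hkk' => cubeC_mono x (by gcongr; norm_num)

theorem iUnion_cubeC_two_pow_mul (x : EuclideanSpace ℝ (Fin n)) {s : ℝ} (hs : 0 < s) :
    ⋃ k : ℕ, cubeC x (2 ^ k * s) = Set.univ := by
  refine Set.eq_univ_of_forall fun y => Set.mem_iUnion.2 ?_
  obtain ⟨k, hk⟩ := pow_unbounded_of_one_lt (2 * ‖x - y‖ / s) one_lt_two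
  refine ⟨k, not_not.1 fun hy => ?_⟩
  have := half_lt_norm_sub_of_notMem_cubeC hy
  rw [div_lt_iff₀ hs] at hk
  linarith

end Cube

theorem integral_le_of_forall_setIntegral_le {α : Type*} [MeasurableSpace α] {μ : Measure α}
    {S : ℕ → Set α} (hSm : ∀ k, MeasurableSet (S k)) (hS : Monotone S)
    (hSU : ⋃ k, S k = Set.univ) {f : α → ℝ} {M : ℝ} (hM : 0 ≤ M)
    (h : ∀ k, ∫ y in S k, f y ∂μ ≤ M) : ∫ y, f y ∂μ ≤ M := by
  -- `0 ≤ M` covers the junk value `∫ f = 0` of a non-integrable `f`.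
  by_cases hf : Integrable f μ
  · have := tendsto_setIntegral_of_monotone hSm hS hf.integrableOn
    rw [hSU, setIntegral_univ] at this
    exact le_of_tendsto' this h
  · rwa [integral_undef hf]

theorem setIntegral_mul_le_sum_of_monotone {α : Type*} [MeasurableSpace α] {μ : Measure α}
    {S : ℕ → Set α} (hSm : ∀ k, MeasurableSet (S k)) (hS : Monotone S) {w F : α → ℝ}
    {a : ℕ → ℝ} (ha : ∀ k, 0 ≤ a k) (hF₀ : ∀ y, 0 ≤ F y) (hF : ∀ k, IntegrableOn F (S k) μ)
    (hwF : ∀ k, IntegrableOn (fun y => w y * F y) (S k) μ) (hw₀ : ∀ y, w y ≤ a 0)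
    (hw : ∀ k y, y ∉ S k → w y ≤ a (k + 1)) (K : ℕ) :
    ∫ y in S K, w y * F y ∂μ ≤ ∑ k ∈ Finset.range (K + 1), a k * ∫ y in S k, F y ∂μ := by
  induction K with
  | zero =>
    rw [zero_add, Finset.sum_range_one, ← integral_const_mul]
    exact setIntegral_mono (hwF 0) ((hF 0).const_mul _)
      fun y => mul_le_mul_of_nonneg_right (hw₀ y) (hF₀ y)
  | succ K ih =>
    have hsplit : ∫ y in S (K + 1), w y * F y ∂μ =
        ∫ y in S K, w y * F y ∂μ + ∫ y in S (K + 1) \ S K, w y * F y ∂μ := by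
      rw [← setIntegral_union Set.disjoint_sdiff_right ((hSm _).diff (hSm _)) (hwF K)
        ((hwF _).mono_set Set.sdiff_subset), Set.union_sdiff_cancel (hS K.le_succ)]
    have hannulus : ∫ y in S (K + 1) \ S K, w y * F y ∂μ ≤ a (K + 1) * ∫ y in S (K + 1), F y ∂μ :=
      calc ∫ y in S (K + 1) \ S K, w y * F y ∂μ
          ≤ ∫ y in S (K + 1) \ S K, a (K + 1) * F y ∂μ :=
            setIntegral_mono_on ((hwF _).mono_set Set.sdiff_subset)
              (IntegrableOn.mono_set ((hF _).const_mul _) Set.sdiff_subset) ((hSm _).diff (hSm _))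
              fun y hy => mul_le_mul_of_nonneg_right (hw K y hy.2) (hF₀ y)
        _ ≤ a (K + 1) * ∫ y in S (K + 1), F y ∂μ := by
            rw [integral_const_mul]
            exact mul_le_mul_of_nonneg_left (setIntegral_mono_set (hF _)
              (.of_forall hF₀) Set.sdiff_subset.eventuallyLE) (ha _)
    rw [hsplit, Finset.sum_range_succ]
    exact add_le_add ih hannulus

theorem sum_range_add_mul_geometric_le {r M : ℝ} (hr₀ : 0 ≤ r) (hr₁ : r < 1) (hM : 1 ≤ M)
    (K : ℕ) : ∑ k ∈ Finset.range K, (k + M) * r ^ k ≤ M / (1 - r) ^ 2 := by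
  have hsum : HasSum (fun k : ℕ => (k + M) * r ^ k) (r / (1 - r) ^ 2 + M * (1 - r)⁻¹) := by
    simp only [add_mul]
    exact (hasSum_coe_mul_geometric_of_norm_lt_one (by rwa [Real.norm_of_nonneg hr₀])).add
      ((hasSum_geometric_of_lt_one hr₀ hr₁).mul_left M)
  have h₁ : 0 < 1 - r := sub_pos.2 hr₁
  calc ∑ k ∈ Finset.range K, (k + M) * r ^ k ≤ r / (1 - r) ^ 2 + M * (1 - r)⁻¹ :=
        sum_le_hasSum _ (fun k _ => by positivity) hsum
    _ = (r + M * (1 - r)) / (1 - r) ^ 2 := by field_simp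
    _ ≤ M / (1 - r) ^ 2 := by gcongr; nlinarith

section BMO

variable {n : ℕ} {g : EuclideanSpace ℝ (Fin n) → ℝ} {B : ℝ}

theorem abs_cAvg_sub_le {c : EuclideanSpace ℝ (Fin n)} {l : ℝ} (hg : IntegrableOn g (cubeC c l))
    (hl : 0 < l) (A : ℝ) :
    |cAvg g c l - A| ≤ (l ^ n)⁻¹ * ∫ y in cubeC c l, |g y - A| := by
  have hvol := volume_cubeC_toReal c hl.le
  have : cAvg g c l - A = (l ^ n)⁻¹ * ∫ y in cubeC c l, (g y - A) := by
    rw [integral_sub hg (integrableOn_const_cubeC c l A), setIntegral_const, measureReal_def,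
      hvol, cAvg, hvol, smul_eq_mul]
    field_simp
  rw [this, abs_mul, abs_of_pos (by positivity)]
  exact mul_le_mul_of_nonneg_left abs_integral_le_integral_abs (by positivity)

theorem integrableOn_abs_sub_cubeC (hg : LocallyIntegrable g volume) (c : EuclideanSpace ℝ (Fin n))
    (l A : ℝ) : IntegrableOn (fun y => |g y - A|) (cubeC c l) :=
  ((hg.integrableOn_isCompact (isCompact_cubeC c l)).sub (integrableOn_const_cubeC c l A)).abs

def BMONormLE (g : EuclideanSpace ℝ (Fin n) → ℝ) (B : ℝ) : Prop :=
  ∀ (c : EuclideanSpace ℝ (Fin n)) (l : ℝ), 0 < l →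
    (volume (cubeC c l)).toReal⁻¹ * ∫ y in cubeC c l, |g y - cAvg g c l| ≤ B

namespace BMONormLE

theorem nonneg (h : BMONormLE g B) : 0 ≤ B :=
  (mul_nonneg (inv_nonneg.2 ENNReal.toReal_nonneg)
    (integral_nonneg fun _ => abs_nonneg _)).trans (h 0 1 one_pos)

theorem setIntegral_abs_sub_cAvg_le (h : BMONormLE g B) (c : EuclideanSpace ℝ (Fin n)) {l : ℝ}
    (hl : 0 < l) : ∫ y in cubeC c l, |g y - cAvg g c l| ≤ l ^ n * B := by
  have := h c l hl
  rwa [volume_cubeC_toReal c hl.le, inv_mul_le_iff₀ (by positivity)] at this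

theorem abs_cAvg_sub_cAvg_le (h : BMONormLE g B) (hg : LocallyIntegrable g volume)
    {c₁ c₂ : EuclideanSpace ℝ (Fin n)} {l₁ l₂ : ℝ} (hl₁ : 0 < l₁) (hl₂ : 0 < l₂)
    (hsub : cubeC c₁ l₁ ⊆ cubeC c₂ l₂) :
    |cAvg g c₁ l₁ - cAvg g c₂ l₂| ≤ (l₂ / l₁) ^ n * B := by
  set A := cAvg g c₂ l₂
  calc |cAvg g c₁ l₁ - A| ≤ (l₁ ^ n)⁻¹ * ∫ y in cubeC c₁ l₁, |g y - A| :=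
        abs_cAvg_sub_le (hg.integrableOn_isCompact (isCompact_cubeC _ _)) hl₁ A
    _ ≤ (l₁ ^ n)⁻¹ * ∫ y in cubeC c₂ l₂, |g y - A| :=
        mul_le_mul_of_nonneg_left
          (setIntegral_mono_set (integrableOn_abs_sub_cubeC hg c₂ l₂ A)
            (.of_forall fun _ => abs_nonneg _) hsub.eventuallyLE)
          (by positivity)
    _ ≤ (l₁ ^ n)⁻¹ * (l₂ ^ n * B) := by gcongr; exact h.setIntegral_abs_sub_cAvg_le c₂ hl₂
    _ = (l₂ / l₁) ^ n * B := by rw [div_pow]; field_simp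

theorem abs_cAvg_two_pow_mul_sub_cAvg_le (h : BMONormLE g B) (hg : LocallyIntegrable g volume)
    (x : EuclideanSpace ℝ (Fin n)) {s : ℝ} (hs : 0 < s) (m : ℕ) :
    |cAvg g x (2 ^ m * s) - cAvg g x s| ≤ m * (2 ^ n * B) := by
  induction m with
  | zero => simp
  | succ m ih =>
    have hdouble : |cAvg g x (2 ^ (m + 1) * s) - cAvg g x (2 ^ m * s)| ≤ 2 ^ n * B := by
      have hm : 2 ^ (m + 1) * s = 2 * (2 ^ m * s) := by ring
      have := h.abs_cAvg_sub_cAvg_le hg (c₁ := x) (c₂ := x) (l₁ := 2 ^ m * s)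
        (l₂ := 2 ^ (m + 1) * s) (by positivity) (by positivity)
        (cubeC_mono x (by rw [hm]; linarith [mul_pos (pow_pos two_pos m) hs]))
      rw [abs_sub_comm, hm, mul_div_cancel_right₀ _ (by positivity)] at this
      rwa [hm]
    calc |cAvg g x (2 ^ (m + 1) * s) - cAvg g x s|
        ≤ |cAvg g x (2 ^ (m + 1) * s) - cAvg g x (2 ^ m * s)| +
            |cAvg g x (2 ^ m * s) - cAvg g x s| := abs_sub_le _ _ _
      _ ≤ 2 ^ n * B + m * (2 ^ n * B) := add_le_add hdouble ih
      _ = (m + 1 : ℕ) * (2 ^ n * B) := by push_cast; ring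

theorem setIntegral_abs_sub_le (h : BMONormLE g B) (hg : LocallyIntegrable g volume)
    (c : EuclideanSpace ℝ (Fin n)) {l : ℝ} (hl : 0 < l) (A : ℝ) :
    ∫ y in cubeC c l, |g y - A| ≤ l ^ n * (B + |cAvg g c l - A|) := by
  have hosc := integrableOn_abs_sub_cubeC hg c l (cAvg g c l)
  have hconst := integrableOn_const_cubeC c l |cAvg g c l - A|
  calc ∫ y in cubeC c l, |g y - A| ≤ ∫ y in cubeC c l, (|g y - cAvg g c l| + |cAvg g c l - A|) :=
        integral_mono_of_nonneg (.of_forall fun _ => abs_nonneg _) (hosc.add hconst)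
          (.of_forall fun y => abs_sub_le _ _ _)
    _ = (∫ y in cubeC c l, |g y - cAvg g c l|) + l ^ n * |cAvg g c l - A| := by
        rw [integral_add hosc hconst, setIntegral_const, measureReal_def,
          volume_cubeC_toReal c hl.le, smul_eq_mul]
    _ ≤ l ^ n * B + l ^ n * |cAvg g c l - A| := by
        gcongr; exact h.setIntegral_abs_sub_cAvg_le c hl
    _ = l ^ n * (B + |cAvg g c l - A|) := by ring

theorem setIntegral_abs_sub_cAvg_le_of_mem (h : BMONormLE g B) (hg : LocallyIntegrable g volume)
    {c x : EuclideanSpace ℝ (Fin n)} {l : ℝ} (hl : 0 < l) (hx : x ∈ cubeC c l) (j : ℕ) :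
    ∫ y in cubeC x (2 ^ j * (2 * l)), |g y - cAvg g c l| ≤
      (2 ^ j * (2 * l)) ^ n * ((j + 2) * (2 ^ n * B)) := by
  have hB := h.nonneg
  have hQ : |cAvg g x (2 * l) - cAvg g c l| ≤ 2 ^ n * B := by
    rw [abs_sub_comm]
    have := h.abs_cAvg_sub_cAvg_le hg hl (by positivity) (cubeC_subset_cubeC_two_mul hx)
    rwa [mul_div_cancel_right₀ _ hl.ne'] at this
  have hchain := h.abs_cAvg_two_pow_mul_sub_cAvg_le hg x (by positivity : 0 < 2 * l) j
  refine (h.setIntegral_abs_sub_le hg x (by positivity) _).trans ?_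
  gcongr
  calc B + |cAvg g x (2 ^ j * (2 * l)) - cAvg g c l|
      ≤ 2 ^ n * B + (|cAvg g x (2 ^ j * (2 * l)) - cAvg g x (2 * l)| +
          |cAvg g x (2 * l) - cAvg g c l|) := by
        gcongr
        · exact le_mul_of_one_le_left hB (one_le_pow₀ one_le_two)
        · exact abs_sub_le _ _ _
    _ ≤ (j + 2) * (2 ^ n * B) := by linarith

end BMONormLE

end BMO

-- The factor `2` in `hk` lets `k = 0` hold for every `z`.
theorem abs_le_of_two_pow_le {E : Type*} [SeminormedAddCommGroup E] {φ : E → ℝ} {n : ℕ}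
    {δ Cφ : ℝ} (hδ : 0 ≤ δ) (hφ : ∀ y, |φ y| ≤ Cφ * (1 + ‖y‖) ^ (-(n : ℝ) - δ)) {z : E} {k : ℕ}
    (hk : 2 ^ k ≤ 2 * (1 + ‖z‖)) :
    |φ z| ≤ Cφ * 2 ^ n * 2 ^ δ * ((2 ^ k) ^ n)⁻¹ * (2 ^ δ)⁻¹ ^ k := by
  have hC : 0 ≤ Cφ := by simpa using (abs_nonneg _).trans (hφ 0)
  have hρ : (0 : ℝ) < 2 ^ k / 2 := by positivity
  calc |φ z| ≤ Cφ * (1 + ‖z‖) ^ (-(n : ℝ) - δ) := hφ z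
    _ ≤ Cφ * (2 ^ k / 2) ^ (-(n : ℝ) - δ) := by
        refine mul_le_mul_of_nonneg_left (Real.rpow_le_rpow_of_nonpos hρ ?_ ?_) hC <;>
          linarith [(n.cast_nonneg : (0 : ℝ) ≤ n)]
    _ = Cφ * 2 ^ n * 2 ^ δ * ((2 ^ k) ^ n)⁻¹ * (2 ^ δ)⁻¹ ^ k := by
        rw [Real.rpow_sub hρ, Real.rpow_neg hρ.le, Real.rpow_natCast,
          Real.div_rpow (by positivity) zero_le_two, ← Real.rpow_pow_comm zero_le_two, inv_pow,
          div_pow]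
        field_simp

section Kernel

variable {n : ℕ}

theorem two_pow_le_norm_smul_sub_of_notMem_cubeC {x y : EuclideanSpace ℝ (Fin n)} {t s : ℝ}
    (ht : 0 < t) (hts : 2 * t ≤ s) {k : ℕ} (hy : y ∉ cubeC x (2 ^ k * s)) :
    2 ^ k ≤ ‖t⁻¹ • (x - y)‖ := by
  have hy := half_lt_norm_sub_of_notMem_cubeC hy
  rw [norm_smul, norm_inv, Real.norm_of_nonneg ht.le, inv_mul_eq_div, le_div_iff₀ ht]
  nlinarith [pow_pos (two_pos : (0 : ℝ) < 2) k]

theorem integral_abs_dilate_mul_le {φ : EuclideanSpace ℝ (Fin n) → ℝ} (hφc : Continuous φ)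
    {δ Cφ : ℝ} (hδ : 0 < δ) (hφ : ∀ y, |φ y| ≤ Cφ * (1 + ‖y‖) ^ (-(n : ℝ) - δ))
    {F : EuclideanSpace ℝ (Fin n) → ℝ} (hF : LocallyIntegrable F volume)
    {x : EuclideanSpace ℝ (Fin n)} {t s M K : ℝ} (ht : 0 < t) (hts : 2 * t ≤ s) (hst : s ≤ 4 * t)
    (hM : 1 ≤ M) (hK : 0 ≤ K)
    (hF_osc : ∀ k : ℕ, ∫ y in cubeC x (2 ^ k * s), |F y| ≤ (2 ^ k * s) ^ n * ((k + M) * K)) :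
    ∫ y, |t ^ (-(n : ℝ)) * φ (t⁻¹ • (x - y)) * F y| ≤
      Cφ * 2 ^ n * 2 ^ δ * 4 ^ n * K * (M / (1 - (2 ^ δ)⁻¹) ^ 2) := by
  have hC : 0 ≤ Cφ := by simpa using (abs_nonneg _).trans (hφ 0)
  have hs : 0 < s := by linarith
  set r : ℝ := (2 ^ δ)⁻¹
  have hr₁ : r < 1 := inv_lt_one_of_one_lt₀ (Real.one_lt_rpow one_lt_two hδ)
  set S : ℕ → Set (EuclideanSpace ℝ (Fin n)) := fun k => cubeC x (2 ^ k * s)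
  set w : EuclideanSpace ℝ (Fin n) → ℝ := fun y => t ^ (-(n : ℝ)) * |φ (t⁻¹ • (x - y))|
  set a : ℕ → ℝ := fun k => t ^ (-(n : ℝ)) * (Cφ * 2 ^ n * 2 ^ δ * ((2 ^ k) ^ n)⁻¹ * r ^ k)
  have hw : ∀ k y, 2 ^ k ≤ 2 * (1 + ‖t⁻¹ • (x - y)‖) → w y ≤ a k := fun k y hk =>
    mul_le_mul_of_nonneg_left (abs_le_of_two_pow_le hδ.le hφ hk) (by positivity)
  have hw_out : ∀ k y, y ∉ S k → w y ≤ a (k + 1) := fun k y hy => hw _ _ <| by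
    rw [pow_succ]
    linarith [two_pow_le_norm_smul_sub_of_notMem_cubeC ht hts hy]
  have hterm : ∀ k : ℕ, a k * ∫ y in S k, |F y| ≤
      Cφ * 2 ^ n * 2 ^ δ * 4 ^ n * K * ((k + M) * r ^ k) := by
    intro k
    calc a k * ∫ y in S k, |F y| ≤ a k * ((2 ^ k * (4 * t)) ^ n * ((k + M) * K)) := by
          refine mul_le_mul_of_nonneg_left ((hF_osc k).trans ?_) (by simp only [a]; positivity)
          gcongr
      _ = Cφ * 2 ^ n * 2 ^ δ * 4 ^ n * K * ((k + M) * r ^ k) := by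
          simp only [a, Real.rpow_neg ht.le, Real.rpow_natCast]
          field_simp
          ring
  refine integral_le_of_forall_setIntegral_le (fun k => measurableSet_cubeC _ _)
    (monotone_cubeC_two_pow_mul x hs.le) (iUnion_cubeC_two_pow_mul x hs) (by positivity)
    fun N => ?_
  have hw_cont : Continuous w := by fun_prop
  calc ∫ y in S N, |t ^ (-(n : ℝ)) * φ (t⁻¹ • (x - y)) * F y| = ∫ y in S N, w y * |F y| := by
        simp only [w, abs_mul, abs_of_nonneg (Real.rpow_nonneg ht.le _)]
    _ ≤ ∑ k ∈ Finset.range (N + 1), a k * ∫ y in S k, |F y| :=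
        setIntegral_mul_le_sum_of_monotone (fun k => measurableSet_cubeC _ _)
          (monotone_cubeC_two_pow_mul x hs.le) (fun k => by simp only [a]; positivity)
          (fun _ => abs_nonneg _)
          (fun k => (hF.integrableOn_isCompact (isCompact_cubeC _ _)).abs)
          (fun k => IntegrableOn.continuousOn_mul hw_cont.continuousOn
            (hF.integrableOn_isCompact (isCompact_cubeC _ _)).abs (isCompact_cubeC _ _))
          (fun y => hw 0 y (by linarith [norm_nonneg (t⁻¹ • (x - y))])) hw_out N
    _ ≤ ∑ k ∈ Finset.range (N + 1), Cφ * 2 ^ n * 2 ^ δ * 4 ^ n * K * ((k + M) * r ^ k) :=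
        Finset.sum_le_sum fun k _ => hterm k
    _ ≤ Cφ * 2 ^ n * 2 ^ δ * 4 ^ n * K * (M / (1 - r) ^ 2) := by
        rw [← Finset.mul_sum]
        gcongr
        exact sum_range_add_mul_geometric_le (by positivity) hr₁ hM _

end Kernel

theorem exists_two_pow_mul_mem_Icc {l t : ℝ} (hl : 0 < l) (hlt : l ≤ t) :
    ∃ u : ℕ, t ≤ 2 ^ u * l ∧ 2 ^ u * l ≤ 2 * t := by
  obtain ⟨m, hm, hm'⟩ := exists_nat_pow_near ((one_le_div hl).2 hlt) one_lt_two
  refine ⟨m + 1, ?_, ?_⟩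
  · exact ((div_lt_iff₀ hl).1 hm').le
  · rw [pow_succ, mul_comm _ (2 : ℝ), mul_assoc]
    exact mul_le_mul_of_nonneg_left ((le_div_iff₀ hl).1 hm) zero_le_two

theorem natCast_add_two_le_of_two_pow_mul_le {u : ℕ} {l t : ℝ} (hl : 0 < l) (ht : 0 < t)
    (hu : 2 ^ u * l ≤ 2 * t) : (u : ℝ) + 2 ≤ 3 / Real.log 2 * (1 + |Real.log (t / l)|) := by
  have hlog2 : 0 < Real.log 2 := Real.log_pos one_lt_two
  have hu' : u * Real.log 2 ≤ Real.log 2 + Real.log (t / l) := by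
    rw [← Real.log_pow, ← Real.log_mul two_ne_zero (by positivity)]
    exact Real.log_le_log (by positivity) (by rw [mul_div_assoc', le_div_iff₀ hl]; linarith)
  have h3 : 3 ≤ 3 / Real.log 2 := by
    rw [le_div_iff₀ hlog2]; linarith [Real.log_two_lt_d9]
  have hL : Real.log (t / l) / Real.log 2 ≤ 3 / Real.log 2 * |Real.log (t / l)| := by
    rw [div_mul_eq_mul_div, div_le_div_iff_of_pos_right hlog2]
    linarith [le_abs_self (Real.log (t / l)), abs_nonneg (Real.log (t / l))]
  have : (u : ℝ) ≤ 1 + Real.log (t / l) / Real.log 2 := by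
    rw [← sub_le_iff_le_add', le_div_iff₀ hlog2]; linarith
  linarith

/-- if `φ` is a Schwartz function with `|φ(y)| ≤ Cφ (1+|y|)^{-n-δ}` and
`g ∈ BMO(ℝⁿ)` with BMO norm at most `B`, then for every cube `Q` (center `c`, side `l`),
`x ∈ Q` and `t > l`, `|φ_t * (g - ⟨g⟩_Q)(x)| ≲ (1 + |log(t/l)|) B`, with constant depending
only on `n`, `δ` and `Cφ`. -/
theorem bmo_convolution_bound (n : ℕ) (δ Cφ : ℝ) (hδ : 0 < δ) :
    ∃ C : ℝ, 0 < C ∧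
      ∀ (φ : SchwartzMap (EuclideanSpace ℝ (Fin n)) ℝ),
        (∀ y, |φ y| ≤ Cφ * (1 + ‖y‖) ^ (-(n : ℝ) - δ)) →
        ∀ (g : EuclideanSpace ℝ (Fin n) → ℝ), LocallyIntegrable g volume →
        ∀ B : ℝ,
        (∀ (c : EuclideanSpace ℝ (Fin n)) (l : ℝ), 0 < l →
          (volume (cubeC c l)).toReal⁻¹ * ∫ y in cubeC c l, |g y - cAvg g c l| ≤ B) →
        ∀ (c : EuclideanSpace ℝ (Fin n)) (l : ℝ), 0 < l →
        ∀ x ∈ cubeC c l, ∀ t : ℝ, l < t →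
          |∫ y, t ^ (-(n : ℝ)) * φ (t⁻¹ • (x - y)) * (g y - cAvg g c l)| ≤
            C * (1 + |Real.log (t / l)|) * B := by
  set r : ℝ := (2 ^ δ)⁻¹
  have hr : 0 < 1 - r := sub_pos.2 (inv_lt_one_of_one_lt₀ (Real.one_lt_rpow one_lt_two hδ))
  refine ⟨(|Cφ| + 1) * 2 ^ n * 2 ^ δ * 8 ^ n / (1 - r) ^ 2 * (3 / Real.log 2),
    mul_pos (div_pos (by positivity) (by positivity)) (div_pos three_pos (Real.log_pos one_lt_two)),
    ?_⟩
  intro φ hφ g hg B hB c l hl x hx t hlt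
  have hBMO : BMONormLE g B := hB
  have ht : 0 < t := hl.trans hlt
  obtain ⟨u, htu, hut⟩ := exists_two_pow_mul_mem_Icc hl hlt.le
  have hosc : ∀ k : ℕ, ∫ y in cubeC x (2 ^ k * (2 ^ u * (2 * l))), |g y - cAvg g c l| ≤
      (2 ^ k * (2 ^ u * (2 * l))) ^ n * ((k + (u + 2)) * (2 ^ n * B)) := fun k => by
    have := hBMO.setIntegral_abs_sub_cAvg_le_of_mem hg hl hx (u + k)
    have hk : ((u + k : ℕ) : ℝ) + 2 = k + (u + 2) := by push_cast; ring
    rwa [pow_add, mul_comm (2 ^ u : ℝ), mul_assoc, hk] at this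
  have hB₀ : 0 ≤ B := hBMO.nonneg
  have hkernel := integral_abs_dilate_mul_le φ.continuous hδ hφ
    (hg.sub (locallyIntegrable_const _)) ht (by linarith) (by linarith)
    (by linarith [u.cast_nonneg (α := ℝ)]) (mul_nonneg (by positivity) hB₀) hosc
  have hCφ : Cφ ≤ |Cφ| + 1 := by linarith [le_abs_self Cφ]
  have hu := natCast_add_two_le_of_two_pow_mul_le hl ht hut
  calc |∫ y, t ^ (-(n : ℝ)) * φ (t⁻¹ • (x - y)) * (g y - cAvg g c l)|
      ≤ ∫ y, |t ^ (-(n : ℝ)) * φ (t⁻¹ • (x - y)) * (g y - cAvg g c l)| :=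
        abs_integral_le_integral_abs
    _ ≤ Cφ * 2 ^ n * 2 ^ δ * 4 ^ n * (2 ^ n * B) * ((u + 2) / (1 - r) ^ 2) := hkernel
    _ = Cφ * 2 ^ n * 2 ^ δ * 8 ^ n / (1 - r) ^ 2 * B * (u + 2) := by
        rw [show (8 : ℝ) ^ n = 4 ^ n * 2 ^ n by rw [← mul_pow]; norm_num]; ring
    _ ≤ (|Cφ| + 1) * 2 ^ n * 2 ^ δ * 8 ^ n / (1 - r) ^ 2 * B *
          (3 / Real.log 2 * (1 + |Real.log (t / l)|)) := by
        gcongr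
    _ = _ := by ring
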